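/- Let (X_t) be a continuous-time simple symmetric random walk on ℤ with generator (1/2)Δ, where Δf(x) = Σ_{|y-x|=1}(f(y)-f(x)). For every λ ≥ 0 and T > 0 there exists a constant c(λ,T) > 0 such that for all n ∈ ℕ, k ∈ ℤ, and t ∈ [0,T], E[exp(-λ|X_{n²t} + k|/n)] ≥ c(λ,T) exp(-λ|k|/n). -/

import Mathlib

open MeasureTheory Set

/-- Number of nearest-neighbour paths of length `m` on `ℤ` from `0` to `x`. -/
def pathCount (m : ℕ) (x : ℤ) : ℕ :=
  if ((m : ℤ) + x) % 2 = 0 ∧ x.natAbs ≤ m then Nat.choose m (((m : ℤ) + x).toNat / 2) else 0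

/-- Transition kernel of the rate-1 continuous-time simple symmetric random walk on `ℤ`
(generator `(1/2)Δ`): `^dp_t(x) = P₀(X_t = x) = e^{-t} Σ_m (t^m/m!) P(S_m = x)`. -/
noncomputable def srwKernel (t : ℝ) (x : ℤ) : ℝ :=
  Real.exp (-t) * ∑' m : ℕ, t ^ m / (m.factorial : ℝ) * (pathCount m x : ℝ) / 2 ^ m

/-!
Condition on the number `m` of jumps of `X` up to time `s`, which is Poisson with mean `s`;
given `m`, the position is the discrete walk `S_m`, and `E[S_m²] = m`, so `E[X_s²] = s`. By the
triangle inequality and the pointwise bound `e^{-a|x|} ≥ e^{-ar} (1 - x²/r²)`,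
`E[e^{-a|X_s + k|}] ≥ e^{-a|k|} e^{-ar} (1 - E[X_s²]/r²)`. For `s = n²t`, `a = λ/n` and
`r = (T + 1) n` the last factor is at least `1/2`, and `e^{-ar} = e^{-λ(T+1)}` does not depend
on `n`.
-/

open Finset

lemma pathCount_two_mul_sub {m j : ℕ} (hj : j ≤ m) :
    pathCount m (2 * (j : ℤ) - m) = m.choose j := by
  unfold pathCount
  rw [if_pos (by omega)]
  congr 1
  omega

lemma pathCount_eq_zero_of_notMem {m : ℕ} {x : ℤ}
    (hx : x ∉ (range (m + 1)).image fun j : ℕ => 2 * (j : ℤ) - m) : pathCount m x = 0 := by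
  unfold pathCount
  rw [if_neg]
  rintro ⟨hpar, habs⟩
  exact hx <| mem_image.mpr
    ⟨((m : ℤ) + x).toNat / 2, by rw [Finset.mem_range]; omega, by omega⟩

lemma hasSum_pathCount_mul (m : ℕ) (f : ℤ → ℝ) :
    HasSum (fun x : ℤ => (pathCount m x : ℝ) * f x)
      (∑ j ∈ range (m + 1), (m.choose j : ℝ) * f (2 * j - m)) := by
  have hsupp : ∀ x ∉ (range (m + 1)).image fun j : ℕ => 2 * (j : ℤ) - m,
      (pathCount m x : ℝ) * f x = 0 := fun x hx => by
    rw [pathCount_eq_zero_of_notMem hx, Nat.cast_zero, zero_mul]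
  have hfin : HasSum (fun x : ℤ => (pathCount m x : ℝ) * f x) _ :=
    hasSum_sum_of_ne_finset_zero hsupp
  convert hfin using 1
  rw [sum_image fun a _ b _ hab => by omega]
  refine sum_congr rfl fun j hj => ?_
  rw [pathCount_two_mul_sub (mem_range_succ_iff.mp hj)]

lemma sum_choose_succ_mul_two_mul_sub (m : ℕ) (f : ℤ → ℝ) :
    ∑ j ∈ range (m + 2), ((m + 1).choose j : ℝ) * f (2 * j - (m + 1 : ℕ))
      = ∑ j ∈ range (m + 1), (m.choose j : ℝ) * (f (2 * j - m - 1) + f (2 * j - m + 1)) := by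
  rw [sum_choose_succ_mul (fun j _ => f (2 * j - (m + 1 : ℕ))), ← sum_add_distrib]
  refine sum_congr rfl fun j _ => ?_
  push_cast
  ring_nf

lemma sum_choose_mul_two_mul_sub_sq (m : ℕ) :
    ∑ j ∈ range (m + 1), (m.choose j : ℝ) * ((2 * j - m : ℤ) : ℝ) ^ 2 = m * 2 ^ m := by
  induction m with
  | zero => simp
  | succ m ih =>
    rw [sum_choose_succ_mul_two_mul_sub m (fun x => ((x : ℝ)) ^ 2)]
    have hstep : ∀ j ∈ range (m + 1),
        (m.choose j : ℝ) * (((2 * j - m - 1 : ℤ) : ℝ) ^ 2 + ((2 * j - m + 1 : ℤ) : ℝ) ^ 2)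
          = 2 * ((m.choose j : ℝ) * ((2 * j - m : ℤ) : ℝ) ^ 2) + 2 * (m.choose j : ℝ) := by
      intro j _
      push_cast
      ring
    rw [sum_congr rfl hstep, sum_add_distrib, ← mul_sum, ← mul_sum, ih, ← Nat.cast_sum,
      Nat.sum_range_choose]
    push_cast
    ring

lemma hasSum_tsum_swap_of_nonneg {β γ : Type*} {f : β → γ → ℝ} {g : β → ℝ} {a : ℝ}
    (hf : ∀ b c, 0 ≤ f b c) (hfg : ∀ b, HasSum (f b) (g b)) (hg : HasSum g a) :
    HasSum (fun c => ∑' b, f b c) a := by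
  have hF : Summable (Function.uncurry f) :=
    (summable_prod_of_nonneg fun p => hf p.1 p.2).mpr
      ⟨fun b => (hfg b).summable, by simpa only [Function.uncurry_apply_pair, (hfg _).tsum_eq]
        using hg.summable⟩
  have hFa : HasSum (Function.uncurry f) a :=
    hF.hasSum.prod_fiberwise hfg |>.unique hg ▸ hF.hasSum
  have hswap : HasSum (fun q : γ × β => f q.2 q.1) a :=
    (Equiv.prodComm γ β).hasSum_iff.mpr hFa
  exact hswap.prod_fiberwise fun c =>
    ((summable_prod_of_nonneg fun q => hf q.2 q.1).mp hswap.summable |>.1 c).hasSum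

lemma Real.hasSum_pow_div_factorial (s : ℝ) :
    HasSum (fun m : ℕ => s ^ m / m.factorial) (Real.exp s) :=
  Real.exp_eq_exp_ℝ ▸ NormedSpace.expSeries_div_hasSum_exp s

lemma hasSum_pow_div_factorial_mul_self (s : ℝ) :
    HasSum (fun m : ℕ => s ^ m / m.factorial * m) (s * Real.exp s) := by
  rw [← hasSum_nat_add_iff' 1]
  have hshift : ∀ m : ℕ, s ^ (m + 1) / (m + 1).factorial * ((m + 1 : ℕ) : ℝ)
      = s * (s ^ m / m.factorial) := fun m => by
    rw [Nat.factorial_succ]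
    push_cast
    field_simp
    ring
  simpa only [hshift, sum_range_one, Nat.cast_zero, mul_zero, sub_zero]
    using (Real.hasSum_pow_div_factorial s).mul_left s

lemma srwKernel_nonneg {s : ℝ} (hs : 0 ≤ s) (x : ℤ) : 0 ≤ srwKernel s x :=
  mul_nonneg (Real.exp_nonneg _) (tsum_nonneg fun _ => by positivity)

/-- `srwKernel s` is the Poisson(`s`) mixture of the laws of the discrete walk `S_m`, and the
binomial sum in `he` is `2 ^ m E[g(S_m)]`. -/
lemma hasSum_srwKernel_mul {s a : ℝ} (hs : 0 ≤ s) {g : ℤ → ℝ} (hg : ∀ x, 0 ≤ g x)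
    {e : ℕ → ℝ}
    (he : ∀ m, ∑ j ∈ range (m + 1), (m.choose j : ℝ) * g (2 * j - m) = 2 ^ m * e m)
    (hea : HasSum (fun m : ℕ => s ^ m / m.factorial * e m) a) :
    HasSum (fun x => srwKernel s x * g x) (Real.exp (-s) * a) := by
  have hterm : ∀ m, HasSum (fun x : ℤ => s ^ m / m.factorial * pathCount m x / 2 ^ m * g x)
      (s ^ m / m.factorial * e m) := fun m => by
    have h := (hasSum_pathCount_mul m g).mul_left (s ^ m / m.factorial / 2 ^ m)
    have hval : s ^ m / m.factorial / 2 ^ m * (2 ^ m * e m) = s ^ m / m.factorial * e m := by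
      field_simp
    rw [he, hval] at h
    exact h.congr_fun fun x => by ring
  have hmix := hasSum_tsum_swap_of_nonneg (fun m x => by have := hg x; positivity) hterm hea
  simpa only [srwKernel, mul_assoc, ← tsum_mul_right] using hmix.mul_left (Real.exp (-s))

lemma hasSum_srwKernel {s : ℝ} (hs : 0 ≤ s) : HasSum (srwKernel s) 1 := by
  have h := hasSum_srwKernel_mul hs (g := fun _ => 1) (fun _ => zero_le_one) (e := fun _ => 1)
    (fun m => by simp [← Nat.cast_sum, Nat.sum_range_choose])
    (by simpa using Real.hasSum_pow_div_factorial s)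
  simpa [← Real.exp_add] using h

lemma hasSum_srwKernel_mul_sq {s : ℝ} (hs : 0 ≤ s) :
    HasSum (fun x : ℤ => srwKernel s x * (x : ℝ) ^ 2) s := by
  have h := hasSum_srwKernel_mul hs (fun x => sq_nonneg (x : ℝ)) (e := fun m => m)
    (fun m => by rw [sum_choose_mul_two_mul_sub_sq, mul_comm])
    (hasSum_pow_div_factorial_mul_self s)
  rwa [mul_left_comm, ← Real.exp_add, neg_add_cancel, Real.exp_zero, mul_one] at h

lemma exp_mul_exp_mul_one_sub_sq_div_le {a r : ℝ} (ha : 0 ≤ a) (hr : 0 < r) (x k : ℝ) :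
    Real.exp (-a * |k|) * Real.exp (-a * r) * (1 - x ^ 2 / r ^ 2) ≤ Real.exp (-a * |x + k|) := by
  by_cases hx : |x| ≤ r
  · calc Real.exp (-a * |k|) * Real.exp (-a * r) * (1 - x ^ 2 / r ^ 2)
        ≤ Real.exp (-a * |k|) * Real.exp (-a * r) * 1 := by
          gcongr
          exact sub_le_self _ (by positivity)
      _ = Real.exp (-a * (|k| + r)) := by rw [mul_one, ← Real.exp_add]; ring_nf
      _ ≤ Real.exp (-a * |x + k|) := by
        have hxk : |x + k| ≤ |k| + r := by linarith [abs_add_le x k]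
        have := mul_le_mul_of_nonneg_left hxk ha
        exact Real.exp_le_exp.mpr (by linarith)
  · have hneg : 1 - x ^ 2 / r ^ 2 ≤ 0 := by
      rw [sub_nonpos, one_le_div (by positivity)]
      nlinarith [sq_abs x, abs_nonneg x]
    exact (mul_nonpos_of_nonneg_of_nonpos (by positivity) hneg).trans (Real.exp_nonneg _)

lemma exp_mul_exp_mul_one_sub_div_le_tsum {P : ℤ → ℝ} {v a r : ℝ} (hP : ∀ x, 0 ≤ P x)
    (hP1 : HasSum P 1) (hP2 : HasSum (fun x : ℤ => P x * (x : ℝ) ^ 2) v) (ha : 0 ≤ a)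
    (hr : 0 < r) (k : ℝ) :
    Real.exp (-a * |k|) * Real.exp (-a * r) * (1 - v / r ^ 2)
      ≤ ∑' x : ℤ, P x * Real.exp (-a * |(x : ℝ) + k|) := by
  set C := Real.exp (-a * |k|) * Real.exp (-a * r)
  have hlow :
      HasSum (fun x : ℤ => P x * (C * (1 - (x : ℝ) ^ 2 / r ^ 2))) (C * (1 - v / r ^ 2)) :=
    ((hP1.sub (hP2.div_const (r ^ 2))).mul_left C).congr_fun fun x => by ring
  have hsummable : Summable fun x : ℤ => P x * Real.exp (-a * |(x : ℝ) + k|) :=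
    hP1.summable.of_nonneg_of_le (fun x : ℤ => mul_nonneg (hP x) (Real.exp_nonneg _))
      fun x : ℤ => mul_le_of_le_one_right (hP x)
        (Real.exp_le_one_iff.mpr (by nlinarith [abs_nonneg ((x : ℝ) + k)]))
  exact hasSum_le (fun x : ℤ => mul_le_mul_of_nonneg_left
    (exp_mul_exp_mul_one_sub_sq_div_le ha hr x k) (hP x)) hlow hsummable.hasSum

theorem srw_rescaled_exp_lower_bound_general (lam T : ℝ) (hlam : 0 ≤ lam) :
    ∃ c : ℝ, 0 < c ∧ ∀ n : ℕ, 0 < n → ∀ k : ℤ, ∀ t ∈ Icc (0 : ℝ) T,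
      c * Real.exp (-lam * |(k : ℝ)| / n)
        ≤ ∑' x : ℤ, srwKernel ((n : ℝ) ^ 2 * t) x * Real.exp (-lam * |(x : ℝ) + (k : ℝ)| / n) := by
  refine ⟨Real.exp (-lam * (T + 1)) / 2, by positivity, fun n hn k t ⟨ht0, htT⟩ => ?_⟩
  have hn' : (0 : ℝ) < n := Nat.cast_pos.mpr hn
  have hs : 0 ≤ (n : ℝ) ^ 2 * t := by positivity
  have hr : 0 < (T + 1) * n := mul_pos (by linarith) hn'
  have hvar : (n : ℝ) ^ 2 * t / ((T + 1) * n) ^ 2 ≤ 1 / 2 := by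
    rw [div_le_iff₀ (by positivity)]
    nlinarith [sq_nonneg (T * n)]
  have hbound := exp_mul_exp_mul_one_sub_div_le_tsum (srwKernel_nonneg hs) (hasSum_srwKernel hs)
    (hasSum_srwKernel_mul_sq hs) (div_nonneg hlam hn'.le) hr k
  have hscale : ∀ y : ℝ, -lam * y / n = -(lam / n) * y := fun y => by ring
  have har : -(lam / n) * ((T + 1) * n) = -lam * (T + 1) := by field_simp
  rw [har] at hbound
  simp_rw [hscale]
  calc Real.exp (-lam * (T + 1)) / 2 * Real.exp (-(lam / n) * |(k : ℝ)|)
      = Real.exp (-(lam / n) * |(k : ℝ)|) * Real.exp (-lam * (T + 1)) * (1 - 1 / 2) := by ring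
    _ ≤ _ := by gcongr
    _ ≤ _ := hbound

/-- Uniform lower bound under diffusive rescaling: for `λ ≥ 0` and `T > 0` there is
`c(λ,T) > 0` with `E[exp(-λ|X_{n²t}+k|/n)] ≥ c(λ,T) exp(-λ|k|/n)` for all `n ≥ 1`, `k ∈ ℤ`,
`t ∈ [0,T]`. -/
theorem srw_rescaled_exp_lower_bound (lam T : ℝ) (hlam : 0 ≤ lam) (hT : 0 < T) :
    ∃ c : ℝ, 0 < c ∧ ∀ n : ℕ, 0 < n → ∀ k : ℤ, ∀ t ∈ Icc (0 : ℝ) T,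
      c * Real.exp (-lam * |(k : ℝ)| / n)
        ≤ ∑' x : ℤ, srwKernel ((n : ℝ) ^ 2 * t) x * Real.exp (-lam * |(x : ℝ) + (k : ℝ)| / n) :=
  srw_rescaled_exp_lower_bound_general lam T hlam
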